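/- arXiv:1203.2809 — 6 statements merged into one kernel-verified Lean document; each statement's English description precedes it below -/
import Mathlib

section
/- Let ≻ be a monotone, transitive relation on atoms satisfying the variable condition (B ≺ A implies Var(B) ⊆ Var(A)), and let R be a rewriting system on atoms all of whose rules (l, r) satisfy l ≻ r or l = r. Then for all atoms A and B, if B →*_R A and A ≠ B, then B ≻ A and Var(A) ⊆ Var(B). -/
open FirstOrder Language

/-- The one-step rewrite relation of an atom rewriting system `R`:
`A →_R B` iff there is a rule `(l, r) ∈ R` and a substitution `σ` with
`A = lσ` and `B = rσ`. -/
def RewriteStep {L : Language} (R : Set (L.Term ℕ × L.Term ℕ))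
    (A B : L.Term ℕ) : Prop :=
  ∃ p ∈ R, ∃ σ : ℕ → L.Term ℕ, A = p.1.subst σ ∧ B = p.2.subst σ

/-! Monotonicity turns every rule `l ≻ r` into `lσ ≻ rσ`, so each rewrite step is a step of the
reflexive closure of `≻`; by transitivity, so is every rewrite sequence, and the variable
condition then follows from `B ≻ A`. -/

theorem Relation.ReflTransGen.reflGen_of_le {α : Type*} {r s : α → α → Prop} [IsTrans α s]
    (hrs : r ≤ ReflGen s) {a b : α} (h : ReflTransGen r a b) : ReflGen s a b := by
  rw [← reflTransGen_eq_reflGen, ← reflTransGen_reflGen]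
  exact ReflTransGen.mono hrs a b h

theorem RewriteStep.reflGen {L : Language} {succ : L.Term ℕ → L.Term ℕ → Prop}
    (hmono : ∀ (A B : L.Term ℕ) (σ : ℕ → L.Term ℕ),
      succ A B → succ (A.subst σ) (B.subst σ))
    {R : Set (L.Term ℕ × L.Term ℕ)} (hR : ∀ p ∈ R, succ p.1 p.2 ∨ p.1 = p.2)
    {A B : L.Term ℕ} (h : RewriteStep R A B) : Relation.ReflGen succ A B := by
  obtain ⟨⟨l, r⟩, hlr, σ, rfl, rfl⟩ := h
  rcases hR _ hlr with hlt | heq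
  · exact .single (hmono l r σ hlt)
  · exact heq ▸ .refl

/-- Second part of Lemma 1: if `≻` is monotone, transitive, satisfies the
variable condition, and every rule `(l, r)` of `R` satisfies `l ≻ r` or
`l = r`, then `B →*_R A` with `A ≠ B` implies `B ≻ A` and
`Var(A) ⊆ Var(B)`. -/
theorem rewrite_reflTransGen_lt {L : Language}
    (succ : L.Term ℕ → L.Term ℕ → Prop)
    (hmono : ∀ (A B : L.Term ℕ) (σ : ℕ → L.Term ℕ),
      succ A B → succ (A.subst σ) (B.subst σ))
    (htrans : ∀ A B C : L.Term ℕ, succ A B → succ B C → succ A C)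
    (hvar : ∀ A B : L.Term ℕ, succ A B → B.varFinset ⊆ A.varFinset)
    (R : Set (L.Term ℕ × L.Term ℕ))
    (hR : ∀ p ∈ R, succ p.1 p.2 ∨ p.1 = p.2)
    (A B : L.Term ℕ) (hsteps : Relation.ReflTransGen (RewriteStep R) B A)
    (hne : A ≠ B) :
    succ B A ∧ A.varFinset ⊆ B.varFinset := by
  have : IsTrans (L.Term ℕ) succ := ⟨htrans⟩
  cases hsteps.reflGen_of_le fun _ _ ↦ RewriteStep.reflGen hmono hR with
  | refl => exact absurd rfl hne
  | single hBA => exact ⟨hBA, hvar B A hBA⟩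
end

section
/- Let ≻ be a monotone, transitive, irreflexive, well-founded relation on atoms, and let R be a rewriting system on atoms all of whose rules (l, r) satisfy l ≻ r or l = r. Define A ≺_R B iff B →*_R A and A ≠ B. Then ≺_R is irreflexive, transitive, and well-founded. -/
open FirstOrder Language

/-- The ordering `≺_R` induced by a rewriting system on atoms:
`A ≺_R B` iff `B →*_R A` and `A ≠ B`. -/
def RewriteLt {L : Language} (R : Set (L.Term ℕ × L.Term ℕ))
    (A B : L.Term ℕ) : Prop :=
  Relation.ReflTransGen (RewriteStep R) B A ∧ A ≠ B

/-!
A rewrite step `lσ →_R rσ` either is trivial or, by monotonicity, descends along `≻`; so `B →*_R A`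
yields a `≻`-path from `B` to `A`, which is nonempty when `A ≠ B`. Hence `≺_R` lies inside the
transitive closure of the converse of `≻`, which inherits well-foundedness. Transitivity of `≺_R` then
only needs `A ≠ C`, and `A = C` would give a cycle `A ≺_R B ≺_R A`.
-/

namespace RewriteStep

variable {L : Language} {R : Set (L.Term ℕ × L.Term ℕ)} {r : L.Term ℕ → L.Term ℕ → Prop}

theorem reflGen_of_monotone (hmono : ∀ (A B : L.Term ℕ) (σ : ℕ → L.Term ℕ),
      r A B → r (A.subst σ) (B.subst σ))
    (hR : ∀ p ∈ R, r p.1 p.2 ∨ p.1 = p.2) {A B : L.Term ℕ} :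
    RewriteStep R A B → Relation.ReflGen r A B := by
  rintro ⟨p, hp, σ, rfl, rfl⟩
  rcases hR p hp with hlt | heq
  · exact .single (hmono _ _ σ hlt)
  · rw [heq]

theorem reflTransGen_le_of_monotone (hmono : ∀ (A B : L.Term ℕ) (σ : ℕ → L.Term ℕ),
      r A B → r (A.subst σ) (B.subst σ))
    (hR : ∀ p ∈ R, r p.1 p.2 ∨ p.1 = p.2) :
    Relation.ReflTransGen (RewriteStep R) ≤ Relation.ReflTransGen r :=
  Relation.reflTransGen_closed fun _ _ h => (reflGen_of_monotone hmono hR h).to_reflTransGen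

end RewriteStep

namespace RewriteLt

variable {L : Language} {R : Set (L.Term ℕ × L.Term ℕ)} {r : L.Term ℕ → L.Term ℕ → Prop}

theorem irrefl (A : L.Term ℕ) : ¬ RewriteLt R A A :=
  fun h => h.2 rfl

theorem transGen_swap_of_le (h : Relation.ReflTransGen (RewriteStep R) ≤ Relation.ReflTransGen r)
    {A B : L.Term ℕ} (hAB : RewriteLt R A B) : Relation.TransGen (Function.swap r) A B := by
  obtain ⟨hBA, hne⟩ := hAB
  rcases Relation.reflTransGen_iff_eq_or_transGen.mp (h B A hBA) with heq | hpath
  · exact absurd heq hne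
  · exact Relation.transGen_swap.mpr hpath

theorem wellFounded_of_le (h : Relation.ReflTransGen (RewriteStep R) ≤ Relation.ReflTransGen r)
    (hwf : WellFounded (Function.swap r)) : WellFounded (RewriteLt R) :=
  Subrelation.wf (transGen_swap_of_le h) hwf.transGen

theorem trans_of_wellFounded (hwf : WellFounded (RewriteLt R)) {A B C : L.Term ℕ}
    (hAB : RewriteLt R A B) (hBC : RewriteLt R B C) : RewriteLt R A C := by
  refine ⟨hBC.1.trans hAB.1, ?_⟩
  rintro rfl
  exact hwf.asymmetric A B hAB hBC

end RewriteLt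

theorem rewriteLt_wellFounded_general {L : Language}
    (succ : L.Term ℕ → L.Term ℕ → Prop)
    (hmono : ∀ (A B : L.Term ℕ) (σ : ℕ → L.Term ℕ),
      succ A B → succ (A.subst σ) (B.subst σ))
    (hwf : WellFounded (fun A B : L.Term ℕ => succ B A))
    (R : Set (L.Term ℕ × L.Term ℕ))
    (hR : ∀ p ∈ R, succ p.1 p.2 ∨ p.1 = p.2) :
    (∀ A : L.Term ℕ, ¬ RewriteLt R A A) ∧
    (∀ A B C : L.Term ℕ, RewriteLt R A B → RewriteLt R B C → RewriteLt R A C) ∧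
    WellFounded (RewriteLt R) := by
  have hwfR : WellFounded (RewriteLt R) :=
    RewriteLt.wellFounded_of_le (RewriteStep.reflTransGen_le_of_monotone hmono hR) hwf
  exact ⟨RewriteLt.irrefl, fun _ _ _ => RewriteLt.trans_of_wellFounded hwfR, hwfR⟩

/-- If `≻` is a monotone, transitive, irreflexive, well-founded relation on
atoms and every rule `(l, r)` of `R` satisfies `l ≻ r` or `l = r`, then the
relation `≺_R` is irreflexive, transitive and well-founded. -/
theorem rewriteLt_wellFounded {L : Language}
    (succ : L.Term ℕ → L.Term ℕ → Prop)
    (hmono : ∀ (A B : L.Term ℕ) (σ : ℕ → L.Term ℕ),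
      succ A B → succ (A.subst σ) (B.subst σ))
    (htrans : ∀ A B C : L.Term ℕ, succ A B → succ B C → succ A C)
    (hirrefl : ∀ A : L.Term ℕ, ¬ succ A A)
    (hwf : WellFounded (fun A B : L.Term ℕ => succ B A))
    (R : Set (L.Term ℕ × L.Term ℕ))
    (hR : ∀ p ∈ R, succ p.1 p.2 ∨ p.1 = p.2) :
    (∀ A : L.Term ℕ, ¬ RewriteLt R A A) ∧
    (∀ A B C : L.Term ℕ, RewriteLt R A B → RewriteLt R B C → RewriteLt R A C) ∧
    WellFounded (RewriteLt R) :=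
  rewriteLt_wellFounded_general succ hmono hwf R hR
end

section
/- Let ≻ be a monotone, transitive, irreflexive, well-founded relation on atoms satisfying the variable condition (B ≺ A implies Var(B) ⊆ Var(A)), and let R be a FINITE rewriting system on atoms, i.e. a finite set of pairs (l, r) of terms with l ≻ r or l = r for every rule. Then for every ground atom A, the set A↓_R = {B | A →*_R B} of atoms reachable from A by rewriting is finite. -/
/-!
Induct along the well-founded order. A rewrite step from `A` uses either a rule with `l = r`, which
returns `A` itself, or a rule with `l ≻ r`, which by monotonicity lands strictly below `A`; so the
atoms reachable from `A` are `A` together with those reachable from its finitely many strictly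
smaller one-step successors.
-/

open FirstOrder Language

theorem Relation.setOf_reflTransGen_finite {α : Type*} {r s : α → α → Prop}
    (hwf : WellFounded s) (hsucc : ∀ a, {b | r a b}.Finite)
    (hdesc : ∀ a b, r a b → b = a ∨ s b a) (a : α) :
    {b | ReflTransGen r a b}.Finite := by
  induction a using hwf.induction with
  | _ a ih =>
  let T : Set α := insert a (⋃ b ∈ {b | r a b ∧ s b a}, {c | ReflTransGen r b c})
  have hsub : {c | ReflTransGen r a c} ⊆ T := by
    intro c hc
    induction hc with
    | refl => exact Set.mem_insert a _
    | @tail c d _ hcd hc =>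
      rcases hc with rfl | hc
      · rcases hdesc c d hcd with rfl | hdc
        · exact Set.mem_insert _ _
        · exact Or.inr (Set.mem_biUnion ⟨hcd, hdc⟩ ReflTransGen.refl)
      · obtain ⟨b, hb, hbc⟩ := Set.mem_iUnion₂.1 hc
        exact Or.inr (Set.mem_biUnion hb (ReflTransGen.tail hbc hcd))
  refine Set.Finite.subset (Set.Finite.insert a ?_) hsub
  exact ((hsucc a).subset fun b hb => hb.1).biUnion fun b hb => ih b hb.2

namespace FirstOrder.Language.Term

variable {L : Language} {α β : Type*} [DecidableEq α]

theorem subst_eq_subst_iff (t : L.Term α) {σ σ' : α → L.Term β} :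
    t.subst σ = t.subst σ' ↔ Set.EqOn σ σ' t.varFinset := by
  induction t with
  | var x => simp [subst, varFinset]
  | func f ts ih =>
    simp only [subst, func.injEq, heq_eq_eq, true_and, funext_iff, ih, varFinset,
      Finset.coe_biUnion, Finset.coe_univ, Set.mem_univ, Set.iUnion_true, Set.EqOn,
      Set.mem_iUnion, forall_exists_index]
    exact forall_comm

end FirstOrder.Language.Term

open FirstOrder.Language.Term in
/-- A rule whose right-hand side has no fresh variables rewrites a given atom in at most one
way, since the atom determines the substitution on the variables of the left-hand side. -/
theorem setOf_rewriteStep_finite {L : Language} {R : Set (L.Term ℕ × L.Term ℕ)} (hfin : R.Finite)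
    (hvar : ∀ p ∈ R, p.2.varFinset ⊆ p.1.varFinset) (A : L.Term ℕ) :
    {B | RewriteStep R A B}.Finite := by
  have hsub : {B | RewriteStep R A B} ⊆
      ⋃ p ∈ R, {B | ∃ σ : ℕ → L.Term ℕ, A = p.1.subst σ ∧ B = p.2.subst σ} := by
    rintro B ⟨p, hp, hB⟩
    exact Set.mem_biUnion hp hB
  refine Set.Finite.subset (hfin.biUnion fun p hp => Set.Subsingleton.finite ?_) hsub
  rintro B ⟨σ, hA, rfl⟩ B' ⟨σ', hA', rfl⟩
  have hagree : Set.EqOn σ σ' p.1.varFinset := (subst_eq_subst_iff p.1).1 (hA ▸ hA')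
  exact (subst_eq_subst_iff p.2).2 (hagree.mono (Finset.coe_subset.2 (hvar p hp)))

theorem reach_finite_general {L : Language}
    (succ : L.Term ℕ → L.Term ℕ → Prop)
    (hmono : ∀ (A B : L.Term ℕ) (σ : ℕ → L.Term ℕ),
      succ A B → succ (A.subst σ) (B.subst σ))
    (hwf : WellFounded (fun A B : L.Term ℕ => succ B A))
    (hvar : ∀ A B : L.Term ℕ, succ A B → B.varFinset ⊆ A.varFinset)
    (R : Set (L.Term ℕ × L.Term ℕ)) (hfin : R.Finite)
    (hR : ∀ p ∈ R, succ p.1 p.2 ∨ p.1 = p.2)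
    (A : L.Term ℕ) :
    {B : L.Term ℕ | Relation.ReflTransGen (RewriteStep R) A B}.Finite := by
  have hRvar : ∀ p ∈ R, p.2.varFinset ⊆ p.1.varFinset := fun p hp =>
    (hR p hp).elim (hvar _ _) fun h => h ▸ subset_rfl
  have hdesc : ∀ A B, RewriteStep R A B → B = A ∨ succ A B := by
    rintro _ _ ⟨p, hp, σ, rfl, rfl⟩
    rcases hR p hp with h | h
    · exact Or.inr (hmono _ _ σ h)
    · exact Or.inl (by rw [h])
  exact Relation.setOf_reflTransGen_finite hwf (setOf_rewriteStep_finite hfin hRvar) hdesc A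

/-- Lemma 2 of the paper: if `R` is a finite rewriting system on atoms
(compatible with a monotone, transitive, irreflexive, well-founded atom
ordering satisfying the variable condition), then for every ground atom `A`
the set `A↓_R` of atoms reachable from `A` by rewriting is finite. -/
theorem reach_finite {L : Language}
    (succ : L.Term ℕ → L.Term ℕ → Prop)
    (hmono : ∀ (A B : L.Term ℕ) (σ : ℕ → L.Term ℕ),
      succ A B → succ (A.subst σ) (B.subst σ))
    (htrans : ∀ A B C : L.Term ℕ, succ A B → succ B C → succ A C)
    (hirrefl : ∀ A : L.Term ℕ, ¬ succ A A)
    (hwf : WellFounded (fun A B : L.Term ℕ => succ B A))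
    (hvar : ∀ A B : L.Term ℕ, succ A B → B.varFinset ⊆ A.varFinset)
    (R : Set (L.Term ℕ × L.Term ℕ)) (hfin : R.Finite)
    (hR : ∀ p ∈ R, succ p.1 p.2 ∨ p.1 = p.2)
    (A : L.Term ℕ) (hground : A.varFinset = ∅) :
    {B : L.Term ℕ | Relation.ReflTransGen (RewriteStep R) A B}.Finite :=
  reach_finite_general succ hmono hwf hvar R hfin hR A
end

section
/- Let r and s be binary relations on a type α such that: s is well-founded; for all x and y, r x y implies x = y or s y x; and for every x the set {y | r x y} of one-step r-successors of x is finite. Then for every a, the set {b | Relation.ReflTransGen r a b} of elements reachable from a under the reflexive-transitive closure of r is finite. -/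
/-!
Well-founded induction along `s`: every element reachable from `a` is `a` itself or reachable
from one of the finitely many successors `c ≠ a` of `a`, and each of these is `s`-below `a`.
-/

namespace Relation

variable {α : Type*} {r : α → α → Prop}

theorem ReflTransGen.eq_or_exists_ne_head {a b : α} (h : ReflTransGen r a b) :
    a = b ∨ ∃ c, r a c ∧ c ≠ a ∧ ReflTransGen r c b := by
  induction h using ReflTransGen.head_induction_on with
  | refl => exact Or.inl rfl
  | @head a c hac hcb ih =>
    by_cases hca : c = a
    · subst hca
      exact ih
    · exact Or.inr ⟨c, hac, hca, hcb⟩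

theorem setOf_reflTransGen_subset_insert_biUnion (a : α) :
    {b | ReflTransGen r a b} ⊆
      insert a (⋃ c ∈ {c | r a c ∧ c ≠ a}, {b | ReflTransGen r c b}) := by
  intro b hb
  rcases hb.eq_or_exists_ne_head with rfl | ⟨c, hac, hca, hcb⟩
  · exact Set.mem_insert _ _
  · exact Set.mem_insert_of_mem _ (Set.mem_biUnion ⟨hac, hca⟩ hcb)

end Relation

/-- König-style lemma used in the paper's Lemma 2: if `r` is a finitely
branching relation whose steps are either trivial or decrease along a
well-founded relation `s`, then the set of elements reachable from any `a`
under the reflexive-transitive closure of `r` is finite. -/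
theorem reachable_finite_of_finitely_branching {α : Type*}
    (r s : α → α → Prop)
    (hwf : WellFounded s)
    (hdec : ∀ x y, r x y → x = y ∨ s y x)
    (hfin : ∀ x, {y | r x y}.Finite)
    (a : α) :
    {b | Relation.ReflTransGen r a b}.Finite := by
  induction a using hwf.induction with
  | _ a ih =>
    have hsucc_lt : ∀ c ∈ {c | r a c ∧ c ≠ a}, s c a := fun c ⟨hac, hca⟩ =>
      (hdec a c hac).resolve_left (Ne.symm hca)
    refine Set.Finite.subset ?_ (Relation.setOf_reflTransGen_subset_insert_biUnion a)
    exact (((hfin a).subset fun _ hc => hc.1).biUnion fun c hc => ih c (hsucc_lt c hc)).insert a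
end

section
/- Let L be a first-order language and model atoms as dependent triples A = ⟨n, P, t⟩ with n : ℕ, P : L.Relations n and t : Fin n → L.Term ℕ, where Var(A) is the union of the Var(t i) and a substitution σ acts on A argumentwise. Let ≺_t be a transitive relation on L.Term ℕ such that: (ground totality) any two distinct ground terms are ≺_t-comparable; (finite complexity) for every ground term t the set of ground terms s with s ≺_t t is finite; (infinitude) the set of ground terms is infinite; (subterm property) for every ground term of the form Term.func f ts, every argument satisfies ts i ≺_t Term.func f ts. Let ≺_a be a transitive, irreflexive relation on atoms that is monotone (A ≺_a B implies Aσ ≺_a Bσ for every substitution σ) and compatible with ≺_t on ground atoms, meaning: whenever ⟨m, P, s⟩ and ⟨n, Q, t⟩ are ground atoms such that for every j there exists i with s j ≺_t t i, then ⟨m, P, s⟩ ≺_a ⟨n, Q, t⟩. Then for all atoms A and B, A ≺_a B implies Var(A) ⊆ Var(B). -/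
open FirstOrder Language

/-- Atoms over a first-order language `L`: a relation symbol together with its
arguments. -/
def Atom (L : Language) : Type _ :=
  Σ n : ℕ, L.Relations n × (Fin n → L.Term ℕ)

/-- The finite set of variables occurring in an atom. -/
def Atom.varFinset {L : Language} (A : Atom L) : Finset ℕ :=
  Finset.univ.biUnion fun i => (A.2.2 i).varFinset

/-- Applying a substitution to an atom, argumentwise. -/
def Atom.subst {L : Language} (A : Atom L) (σ : ℕ → L.Term ℕ) : Atom L :=
  ⟨A.1, A.2.1, fun i => (A.2.2 i).subst σ⟩

/-!
If `x` occurs in `A` but not in `B`, ground `B` by sending every variable to a fixed ground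
term `c`, and choose a ground term `d` above all arguments of the resulting atom; it exists
because only finitely many ground terms lie below those arguments while there are infinitely
many ground terms, all comparable. Under `σ = (· ↦ c)[x ↦ d]` the atom `Bσ` is still that
grounding of `B`, while some argument of `Aσ` contains `d` as a subterm, hence is `≽_t d`.
Compatibility gives `Bσ ≺_a Aσ`, monotonicity gives `Aσ ≺_a Bσ`, contradicting irreflexivity.
-/

theorem Set.Finite.exists_upper_bound_of_total {α : Type*} {G : Set α} {r : α → α → Prop}
    (htotal : ∀ a ∈ G, ∀ b ∈ G, a ≠ b → r a b ∨ r b a)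
    (hfin : ∀ b ∈ G, {a | a ∈ G ∧ r a b}.Finite) (hinf : G.Infinite)
    {S : Set α} (hS : S.Finite) (hSG : S ⊆ G) : ∃ d ∈ G, ∀ s ∈ S, r s d := by
  have hbelow : (S ∪ ⋃ s ∈ S, {a | a ∈ G ∧ r a s}).Finite :=
    hS.union (hS.biUnion fun s hs => hfin s (hSG hs))
  obtain ⟨d, hdG, hdS⟩ := (hinf.sdiff hbelow).nonempty
  refine ⟨d, hdG, fun s hs => ?_⟩
  have hne : d ≠ s := by rintro rfl; exact hdS (Or.inl hs)
  rcases htotal d hdG s (hSG hs) hne with hds | hsd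
  · exact (hdS <| Or.inr <| Set.mem_biUnion hs ⟨hdG, hds⟩).elim
  · exact hsd

namespace FirstOrder.Language.Term

variable {L : Language} {α β : Type*}

theorem subst_congr {t : L.Term α} [DecidableEq α] {σ τ : α → L.Term β}
    (h : ∀ v ∈ t.varFinset, σ v = τ v) : t.subst σ = t.subst τ := by
  induction t with
  | var v => exact h v (Finset.mem_singleton_self v)
  | func f ts ih =>
    exact congrArg (func f) <| funext fun i =>
      ih i fun v hv => h v (Finset.mem_biUnion.2 ⟨i, Finset.mem_univ i, hv⟩)

theorem varFinset_subst [DecidableEq α] [DecidableEq β] (t : L.Term α) (σ : α → L.Term β) :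
    (t.subst σ).varFinset = t.varFinset.biUnion fun v => (σ v).varFinset := by
  induction t with
  | var v => simp [subst, varFinset]
  | func f ts ih => simp [subst, varFinset, ih, Finset.biUnion_biUnion]

theorem varFinset_subst_eq_empty [DecidableEq α] [DecidableEq β] (t : L.Term α)
    {σ : α → L.Term β} (hσ : ∀ v, (σ v).varFinset = ∅) : (t.subst σ).varFinset = ∅ := by
  simp [varFinset_subst, hσ, Finset.eq_empty_iff_forall_notMem]

theorem reflTransGen_subst_of_mem_varFinset [DecidableEq α] [DecidableEq β]
    {r : L.Term β → L.Term β → Prop}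
    (hsubterm : ∀ (n : ℕ) (f : L.Functions n) (ts : Fin n → L.Term β),
      (func f ts).varFinset = ∅ → ∀ i, r (ts i) (func f ts))
    {t : L.Term α} {σ : α → L.Term β} {x : α} (hx : x ∈ t.varFinset)
    (hground : (t.subst σ).varFinset = ∅) : Relation.ReflTransGen r (σ x) (t.subst σ) := by
  induction t with
  | var v =>
    rw [Finset.mem_singleton.1 hx]
    exact Relation.ReflTransGen.refl
  | func f ts ih =>
    obtain ⟨i, -, hxi⟩ := Finset.mem_biUnion.1 hx
    have hground_i : ((ts i).subst σ).varFinset = ∅ :=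
      Finset.subset_empty.1 <| le_of_le_of_eq
        (Finset.subset_biUnion_of_mem (fun k => ((ts k).subst σ).varFinset) (Finset.mem_univ i))
        hground
    exact (ih i hxi hground_i).tail (hsubterm _ f (fun j => (ts j).subst σ) hground i)

end FirstOrder.Language.Term

namespace Atom

variable {L : Language}

theorem mem_varFinset {A : Atom L} {x : ℕ} :
    x ∈ A.varFinset ↔ ∃ i, x ∈ (A.2.2 i).varFinset := by
  simp [Atom.varFinset]

theorem varFinset_subst_eq_empty (A : Atom L) {σ : ℕ → L.Term ℕ}
    (hσ : ∀ v, (σ v).varFinset = ∅) : (A.subst σ).varFinset = ∅ := by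
  simp [Atom.varFinset, Atom.subst, Term.varFinset_subst_eq_empty _ hσ,
    Finset.eq_empty_iff_forall_notMem]

end Atom

/-- Proposition of Section 7: an atom ordering `≺_a` that is monotone and
compatible with a transitive term ordering `≺_t` which is total on ground
terms, of finite complexity, over an infinite set of ground terms, and has the
subterm property, satisfies the variable condition
`A ≺_a B → Var(A) ⊆ Var(B)`. -/
theorem compatible_atom_order_var_condition {L : Language}
    (precT : L.Term ℕ → L.Term ℕ → Prop)
    (htransT : ∀ s t u : L.Term ℕ, precT s t → precT t u → precT s u)
    (htotal : ∀ s t : L.Term ℕ, s.varFinset = ∅ → t.varFinset = ∅ → s ≠ t →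
      precT s t ∨ precT t s)
    (hfincomp : ∀ t : L.Term ℕ, t.varFinset = ∅ →
      {s : L.Term ℕ | s.varFinset = ∅ ∧ precT s t}.Finite)
    (hinf : {t : L.Term ℕ | t.varFinset = ∅}.Infinite)
    (hsubterm : ∀ (n : ℕ) (f : L.Functions n) (ts : Fin n → L.Term ℕ),
      (Term.func f ts).varFinset = ∅ →
      ∀ i : Fin n, precT (ts i) (Term.func f ts))
    (precA : Atom L → Atom L → Prop)
    (htransA : ∀ A B C : Atom L, precA A B → precA B C → precA A C)
    (hirreflA : ∀ A : Atom L, ¬ precA A A)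
    (hmonoA : ∀ (A B : Atom L) (σ : ℕ → L.Term ℕ),
      precA A B → precA (A.subst σ) (B.subst σ))
    (hcompat : ∀ A B : Atom L,
      A.varFinset = ∅ → B.varFinset = ∅ →
      (∀ j : Fin A.1, ∃ i : Fin B.1, precT (A.2.2 j) (B.2.2 i)) →
      precA A B) :
    ∀ A B : Atom L, precA A B → A.varFinset ⊆ B.varFinset := by
  intro A B hAB x hxA
  by_contra hxB
  obtain ⟨c, hc : c.varFinset = ∅⟩ := hinf.nonempty
  obtain ⟨d, hd : d.varFinset = ∅, hBd⟩ :=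
    (Set.finite_range fun i => (B.2.2 i).subst fun _ => c).exists_upper_bound_of_total
      (fun s hs t ht => htotal s t hs ht) hfincomp hinf
      (Set.range_subset_iff.2 fun i => Term.varFinset_subst_eq_empty _ fun _ => hc)
  set σ : ℕ → L.Term ℕ := Function.update (fun _ => c) x d
  have hσ : ∀ v, (σ v).varFinset = ∅ := fun v => by
    by_cases hv : v = x <;> simp [σ, hv, hc, hd]
  have hBσ : ∀ i, precT ((B.2.2 i).subst σ) d := fun i => by
    have hσB : (B.2.2 i).subst σ = (B.2.2 i).subst fun _ => c := Term.subst_congr fun v hv => by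
      simp [σ, ne_of_mem_of_not_mem (Atom.mem_varFinset.2 ⟨i, hv⟩) hxB]
    exact hσB ▸ hBd _ ⟨i, rfl⟩
  obtain ⟨j, hxj⟩ := Atom.mem_varFinset.1 hxA
  have hdA : Relation.ReflTransGen precT d ((A.2.2 j).subst σ) := by
    simpa [σ] using Term.reflTransGen_subst_of_mem_varFinset hsubterm hxj
      (Term.varFinset_subst_eq_empty _ hσ)
  have : IsTrans _ precT := ⟨htransT⟩
  have hBA : precA (B.subst σ) (A.subst σ) :=
    hcompat _ _ (B.varFinset_subst_eq_empty hσ) (A.varFinset_subst_eq_empty hσ) fun i =>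
      ⟨j, Relation.transGen_minimal le_rfl _ _ (.head' (hBσ i) hdA)⟩
  exact hirreflA _ (htransA _ _ _ (hmonoA A B σ hAB) hBA)
end

section
/- Let ≻ be a transitive, irreflexive relation on a type α that is total, i.e. for any two distinct elements a and b, either a ≻ b or b ≻ a. Define the set extension ≻^set on finite sets by: η₁ ≻^set η₂ iff η₁ ≠ η₂ and for every e ∈ η₂ \ η₁ there exists e' ∈ η₁ \ η₂ with e' ≻ e. Then ≻^set is total on Finset α: for any two finite sets η₁ ≠ η₂, either η₁ ≻^set η₂ or η₂ ≻^set η₁. -/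
/-!
Take an element `m` of the symmetric difference `η₁ ∆ η₂` that dominates all its other
elements (it exists because `≻` is transitive and total). If `m ∈ η₁ \ η₂`, it witnesses
`η₁ ≻^set η₂`; otherwise `m ∈ η₂ \ η₁` witnesses `η₂ ≻^set η₁`.
-/

/-- The set extension of an ordering `≻`: `η₁ ≻^set η₂` iff `η₁ ≠ η₂` and every
element of `η₂ \ η₁` is dominated by some element of `η₁ \ η₂`. -/
def SetExt {α : Type*} [DecidableEq α] (succ : α → α → Prop)
    (η₁ η₂ : Finset α) : Prop :=
  η₁ ≠ η₂ ∧ ∀ e ∈ η₂ \ η₁, ∃ e' ∈ η₁ \ η₂, succ e' e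

theorem Finset.Nonempty.exists_forall_ne_rel {α : Type*} {r : α → α → Prop}
    (htrans : ∀ a b c, r a b → r b c → r a c) (htotal : ∀ a b, a ≠ b → r a b ∨ r b a)
    {s : Finset α} (hs : s.Nonempty) : ∃ m ∈ s, ∀ x ∈ s, x ≠ m → r m x := by
  -- `m` is an upper bound of `s` for the reflexive closure of the converse of `r`.
  let dominatedBy : α → α → Prop := fun a b => a = b ∨ r b a
  have : IsTrans α dominatedBy := ⟨by
    rintro a b c (rfl | hba) (rfl | hcb)
    exacts [.inl rfl, .inr hcb, .inr hba, .inr (htrans c b a hcb hba)]⟩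
  have : Nonempty s := hs.to_subtype
  have hdir : Directed dominatedBy ((↑) : s → α) := fun a b => by
    by_cases hab : (a : α) = b
    · exact ⟨a, .inl rfl, .inl hab.symm⟩
    · rcases htotal a b hab with h | h
      exacts [⟨a, .inl rfl, .inr h⟩, ⟨b, .inr h, .inl rfl⟩]
  obtain ⟨m, hm⟩ := hdir.finset_le Finset.univ
  exact ⟨m, m.2, fun x hx hxm => (hm ⟨x, hx⟩ (Finset.mem_univ _)).resolve_left hxm⟩

theorem setExt_of_mem_sdiff {α : Type*} [DecidableEq α] {succ : α → α → Prop}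
    {η₁ η₂ : Finset α} {m : α} (hne : η₁ ≠ η₂) (hm : m ∈ η₁ \ η₂)
    (hdom : ∀ x ∈ η₂ \ η₁, x ≠ m → succ m x) : SetExt succ η₁ η₂ :=
  ⟨hne, fun e he => ⟨m, hm, hdom e he fun hem =>
    (Finset.mem_sdiff.1 he).2 (hem ▸ (Finset.mem_sdiff.1 hm).1)⟩⟩

theorem setExt_total_general {α : Type*} [DecidableEq α]
    (succ : α → α → Prop)
    (htrans : ∀ a b c : α, succ a b → succ b c → succ a c)
    (htotal : ∀ a b : α, a ≠ b → succ a b ∨ succ b a) :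
    ∀ η₁ η₂ : Finset α, η₁ ≠ η₂ → SetExt succ η₁ η₂ ∨ SetExt succ η₂ η₁ := by
  intro η₁ η₂ hne
  obtain ⟨m, hm, hdom⟩ :=
    (Finset.symmDiff_nonempty.2 hne).exists_forall_ne_rel htrans htotal
  rw [Finset.symmDiff_def] at hm hdom
  rcases Finset.mem_union.1 hm with hm₁ | hm₂
  · exact .inl (setExt_of_mem_sdiff hne hm₁ fun x hx => hdom x (Finset.mem_union_right _ hx))
  · exact .inr (setExt_of_mem_sdiff hne.symm hm₂ fun x hx => hdom x (Finset.mem_union_left _ hx))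

/-- If `≻` is a transitive, irreflexive, total relation on `α`, then its set
extension `≻^set` is total on `Finset α`. -/
theorem setExt_total {α : Type*} [DecidableEq α]
    (succ : α → α → Prop)
    (htrans : ∀ a b c : α, succ a b → succ b c → succ a c)
    (hirrefl : ∀ a : α, ¬ succ a a)
    (htotal : ∀ a b : α, a ≠ b → succ a b ∨ succ b a) :
    ∀ η₁ η₂ : Finset α, η₁ ≠ η₂ → SetExt succ η₁ η₂ ∨ SetExt succ η₂ η₁ :=
  setExt_total_general succ htrans htotal
end
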